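/- For every positive integer d, the number of integer tetrahedra with diameter d and perimeter 3d + 3, up to congruence, equals ⌈d/2⌉. Equivalently: the congruence classes are in bijection with integer pairs (B, C) with 1 ≤ B ≤ C ≤ d and B + C = d + 1, formed by folding two congruent (B, C, d)-triangles along their common side of length d until their apexes are 1 apart. -/

import Mathlib

/-- An integer tetrahedron: four affinely independent points in `ℝ³` all of whose
pairwise distances are (positive) integers. -/
def IsIntegerTetrahedron (v : Fin 4 → EuclideanSpace ℝ (Fin 3)) : Prop :=
  AffineIndependent ℝ v ∧ ∀ i j : Fin 4, i ≠ j → ∃ m : ℕ, 0 < m ∧ dist (v i) (v j) = m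

/-- `v` has perimeter `n`: the six edge lengths sum to `n` (ordered pairs count twice). -/
def TetraPerim (v : Fin 4 → EuclideanSpace ℝ (Fin 3)) (n : ℕ) : Prop :=
  ∑ i : Fin 4, ∑ j : Fin 4, dist (v i) (v j) = 2 * (n : ℝ)

/-- `v` has diameter `d`: the maximum of the six edge lengths is `d`. -/
def TetraDiam (v : Fin 4 → EuclideanSpace ℝ (Fin 3)) (d : ℕ) : Prop :=
  (∃ i j : Fin 4, dist (v i) (v j) = (d : ℝ)) ∧
    ∀ i j : Fin 4, dist (v i) (v j) ≤ (d : ℝ)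

/-- Two tetrahedra are congruent if after a permutation of the vertices all
corresponding edge lengths agree. -/
def TetraCongruent (v w : Fin 4 → EuclideanSpace ℝ (Fin 3)) : Prop :=
  ∃ σ : Equiv.Perm (Fin 4), ∀ i j : Fin 4, dist (w i) (w j) = dist (v (σ i)) (v (σ j))

/-- The number of integer tetrahedra of perimeter `n` and diameter `d`,
up to congruence. -/
noncomputable def tetraCount (n d : ℕ) : ℕ :=
  Nat.card (Quot (fun v w : {v : Fin 4 → EuclideanSpace ℝ (Fin 3) //
    IsIntegerTetrahedron v ∧ TetraPerim v n ∧ TetraDiam v d} =>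
      TetraCongruent v.1 w.1))

/-!
Label the tetrahedron so that its longest edge `d` is `v₀v₁`. The faces through `v₀v₁` are integer
triangles `(d, B, C)` and `(d, b, c)`, so `B + C ≥ d + 1` and `b + c ≥ d + 1`; together with the
opposite edge `a ≥ 1` the perimeter `3d + 3` forces equality everywhere and `a = 1`. The apexes
`v₂, v₃` then lie on a common ellipse with foci `v₀, v₁`, and for two such points
`(d + 1) |B - b| ≤ |v₂v₃| |v₀v₁| = d`, so `B = b`: the tetrahedron is two copies of the triangle
`(d, B, C)` folded along `v₀v₁` until the apexes are `1` apart. Conversely this fold exists since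
the altitude of such a triangle onto `d` exceeds `1/√2 > 1/2`. Folds with different `B ≤ C` are
incongruent, as the sum `2(d² + 2B² + 2C² + 1)` of the squared edge lengths shows, and there are
`⌈d/2⌉` choices of `B`.
-/

section InnerProductSpace

variable {V : Type*} [NormedAddCommGroup V] [InnerProductSpace ℝ V]

theorem two_mul_inner_sub_sub_sub (p q u w : V) :
    2 * inner ℝ (p - q) (w - u) = dist p u ^ 2 - dist p w ^ 2 - dist q u ^ 2 + dist q w ^ 2 := by
  simp only [dist_eq_norm, norm_sub_sq_real, inner_sub_left, inner_sub_right]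
  ring

theorem mul_abs_dist_sub_dist_le {p q u w : V} {s : ℝ} (hp : dist p u + dist p w = s)
    (hq : dist q u + dist q w = s) : s * |dist p u - dist q u| ≤ dist p q * dist u w := by
  have key : s * (dist p u - dist q u) = inner ℝ (p - q) (w - u) := by
    linear_combination (-1 / 2) * two_mul_inner_sub_sub_sub p q u w +
      ((s - dist p u + dist p w) / 2) * hp + ((dist q u - dist q w - s) / 2) * hq
  calc s * |dist p u - dist q u| = |inner ℝ (p - q) (w - u)| := by
        rw [← key, abs_mul, abs_of_nonneg (a := s) (by rw [← hp]; positivity)]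
    _ ≤ ‖p - q‖ * ‖w - u‖ := abs_real_inner_le_norm _ _
    _ = dist p q * dist u w := by rw [dist_eq_norm, dist_eq_norm, norm_sub_rev w u]

theorem eq_of_dist_add_dist_eq_succ {p q u w : V} {d B C b c : ℕ} (hpq : dist p q = 1)
    (huw : dist u w = d) (hpu : dist p u = B) (hpw : dist p w = C) (hqu : dist q u = b)
    (hqw : dist q w = c) (hBC : B + C = d + 1) (hbc : b + c = d + 1) : B = b := by
  have hell := mul_abs_dist_sub_dist_le (p := p) (q := q) (u := u) (w := w) (s := d + 1)
    (by rw [hpu, hpw]; exact_mod_cast hBC) (by rw [hqu, hqw]; exact_mod_cast hbc)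
  rw [hpu, hqu, hpq, huw, one_mul] at hell
  have hlt : |(B : ℝ) - b| < 1 := by nlinarith [abs_nonneg ((B : ℝ) - b)]
  have := Int.abs_lt_one_iff.mp (by exact_mod_cast hlt : |(B : ℤ) - b| < 1)
  omega

end InnerProductSpace

theorem AffineIndependent.dist_lt_dist_add_dist {ι V P : Type*} [NormedAddCommGroup V]
    [NormedSpace ℝ V] [StrictConvexSpace ℝ V] [MetricSpace P] [NormedAddTorsor V P]
    {v : ι → P} (hv : AffineIndependent ℝ v) {i j k : ι} (hki : k ≠ i) (hkj : k ≠ j) :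
    dist (v i) (v j) < dist (v i) (v k) + dist (v k) (v j) := by
  refine (dist_triangle _ _ _).lt_of_ne fun h => ?_
  have hk : v k ∈ line[ℝ, v i, v j] := (dist_add_dist_eq_iff.mp h.symm).mem_affineSpan
  have := hv.notMem_affineSpan_sdiff k {i, j}
  rw [Set.sdiff_singleton_eq_self (by simp [hki, hkj]), Set.image_pair] at this
  exact this hk

theorem Nat.eq_of_add_eq_of_sq_add_sq_eq {B₁ C₁ B₂ C₂ : ℕ} (hBC : B₁ + C₁ = B₂ + C₂)
    (hle₁ : B₁ ≤ C₁) (hle₂ : B₂ ≤ C₂) (h : B₁ ^ 2 + C₁ ^ 2 = B₂ ^ 2 + C₂ ^ 2) : B₁ = B₂ := by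
  nlinarith

theorem card_quot_eq_of_invariant {α ι β : Type*} {r : α → α → Prop} (T : ι → α) (I : α → β)
    (hI : ∀ a b, r a b → I a = I b) (hT : Function.Injective (I ∘ T))
    (hsurj : ∀ a, ∃ i, r (T i) a) : Nat.card (Quot r) = Nat.card ι := by
  refine (Nat.card_eq_of_bijective (fun i => Quot.mk r (T i)) ⟨fun i j hij => hT ?_, ?_⟩).symm
  · exact congrArg (Quot.lift I hI) hij
  · rintro ⟨a⟩
    obtain ⟨i, hi⟩ := hsurj a
    exact ⟨i, Quot.sound hi⟩

section FourPoints

variable {P : Type*} [PseudoMetricSpace P]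

theorem sum_sum_dist_fin_four (v : Fin 4 → P) (f : ℝ → ℝ) :
    ∑ i, ∑ j, f (dist (v i) (v j)) = 4 * f 0 + 2 * (f (dist (v 0) (v 1)) +
      f (dist (v 0) (v 2)) + f (dist (v 0) (v 3)) + f (dist (v 1) (v 2)) +
      f (dist (v 1) (v 3)) + f (dist (v 2) (v 3))) := by
  simp only [Fin.sum_univ_four, dist_self, dist_comm (v 1) (v 0), dist_comm (v 2) (v 0),
    dist_comm (v 3) (v 0), dist_comm (v 2) (v 1), dist_comm (v 3) (v 1), dist_comm (v 3) (v 2)]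
  ring

/-- Two copies of the triangle with sides `d, B, C`, hinged along the common side `v₀v₁` of
length `d`, with apexes `v₂, v₃` at distance `a`. -/
def IsFold (v : Fin 4 → P) (d B C a : ℝ) : Prop :=
  dist (v 0) (v 1) = d ∧ dist (v 0) (v 2) = B ∧ dist (v 0) (v 3) = B ∧
    dist (v 1) (v 2) = C ∧ dist (v 1) (v 3) = C ∧ dist (v 2) (v 3) = a

namespace IsFold

variable {v : Fin 4 → P} {d B C a : ℝ}

theorem dist_apply (h : IsFold v d B C a) (i j : Fin 4) :
    dist (v i) (v j) = !![0, d, B, B; d, 0, C, C; B, C, 0, a; B, C, a, 0] i j := by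
  obtain ⟨h01, h02, h03, h12, h13, h23⟩ := h
  fin_cases i <;> fin_cases j <;> simp [dist_comm (v 1) (v 0), dist_comm (v 2) (v 0),
    dist_comm (v 3) (v 0), dist_comm (v 2) (v 1), dist_comm (v 3) (v 1), dist_comm (v 3) (v 2), *]

theorem sum_sum_dist (h : IsFold v d B C a) (f : ℝ → ℝ) :
    ∑ i, ∑ j, f (dist (v i) (v j)) = 4 * f 0 + 2 * (f d + 2 * f B + 2 * f C + f a) := by
  obtain ⟨h01, h02, h03, h12, h13, h23⟩ := h
  rw [sum_sum_dist_fin_four, h01, h02, h03, h12, h13, h23]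
  ring

theorem comp_swap (h : IsFold v d B C a) : IsFold (v ∘ Equiv.swap 0 1) d C B a := by
  refine ⟨?_, ?_, ?_, ?_, ?_, ?_⟩ <;> simp [h.dist_apply, Equiv.swap_apply_of_ne_of_ne]

end IsFold

end FourPoints

namespace EuclideanSpace

theorem dist_toLp_fin_three_eq {x₁ y₁ z₁ x₂ y₂ z₂ r : ℝ} (hr : 0 ≤ r)
    (h : (x₁ - x₂) ^ 2 + (y₁ - y₂) ^ 2 + (z₁ - z₂) ^ 2 = r ^ 2) :
    dist !₂[x₁, y₁, z₁] !₂[x₂, y₂, z₂] = r := by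
  rw [EuclideanSpace.dist_eq, ← Real.sqrt_sq hr, ← h]
  simp [Fin.sum_univ_three, Real.dist_eq, sq_abs]

theorem affineIndependent_lowerTriangular {d x h x' y z : ℝ} (hd : d ≠ 0) (hh : h ≠ 0)
    (hz : z ≠ 0) :
    AffineIndependent ℝ ![!₂[0, 0, 0], !₂[d, 0, 0], !₂[x, h, 0], !₂[x', y, z]] := by
  rw [affineIndependent_iff_linearIndependent_vsub ℝ _ 0,
    ← linearIndependent_equiv (finSuccAboveEquiv 0)]
  have hrows : LinearIndependent ℝ ![![d, 0, 0], ![x, h, 0], ![x', y, z]] :=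
    Matrix.linearIndependent_rows_of_det_ne_zero (A := !![d, 0, 0; x, h, 0; x', y, z]) (by
      rw [Matrix.det_fin_three]
      simp [hd, hh, hz])
  convert hrows.map' (WithLp.linearEquiv 2 ℝ (Fin 3 → ℝ)).symm.toLinearMap (LinearEquiv.ker _)
    using 1
  ext i j
  fin_cases i <;> fin_cases j <;> simp [finSuccAboveEquiv]

end EuclideanSpace

/-- The squared altitude onto the side `d` of the triangle with sides `d, B, C`: the foot of the
altitude lies at distance `(B² + d² - C²) / (2d)` from the common vertex of `d` and `B`. -/
noncomputable def altitudeSq (d B C : ℝ) : ℝ :=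
  B ^ 2 - ((B ^ 2 + d ^ 2 - C ^ 2) / (2 * d)) ^ 2

theorem half_lt_altitudeSq {d B C : ℝ} (hB : 1 ≤ B) (hC : 1 ≤ C) (hBd : B ≤ d) (hCd : C ≤ d)
    (hBC : d + 1 ≤ B + C) : 1 / 2 < altitudeSq d B C := by
  have hd : 0 < d := by linarith
  have heron : 4 * d ^ 2 * altitudeSq d B C = ((B + C) ^ 2 - d ^ 2) * (d ^ 2 - (B - C) ^ 2) := by
    rw [altitudeSq]
    field_simp
    ring
  have h₁ : 2 * d + 1 ≤ (B + C) ^ 2 - d ^ 2 := by nlinarith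
  have h₂ : 2 * d - 1 ≤ d ^ 2 - (B - C) ^ 2 := by nlinarith
  nlinarith [mul_le_mul h₁ h₂ (by linarith) (by linarith)]

theorem exists_affineIndependent_isFold {d B C a : ℝ} (hd : 0 < d) (hB : 0 ≤ B) (hC : 0 ≤ C)
    (ha : 0 < a) (hah : a ^ 2 < 4 * altitudeSq d B C) :
    ∃ v : Fin 4 → EuclideanSpace ℝ (Fin 3), AffineIndependent ℝ v ∧ IsFold v d B C a := by
  set x := (B ^ 2 + d ^ 2 - C ^ 2) / (2 * d) with hx
  set h := √(altitudeSq d B C)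
  have hh : 0 < h := Real.sqrt_pos.2 (by nlinarith)
  have hh2 : h ^ 2 = altitudeSq d B C := Real.sq_sqrt (by nlinarith)
  have hah' : a < 2 * h := by nlinarith
  have hxh : x ^ 2 + h ^ 2 = B ^ 2 := by rw [hh2, altitudeSq]; ring
  have hdx : 2 * d * x = B ^ 2 + d ^ 2 - C ^ 2 := by rw [hx]; field_simp
  -- The second apex is the first one rotated about the hinge `v₀v₁` by the angle at which the
  -- chord between them has length `a`.
  set k := a ^ 2 / (2 * h) with hk
  have hkh : 2 * h * k = a ^ 2 := by rw [hk]; field_simp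
  have hka : k < a := by
    rw [hk, div_lt_iff₀ (by positivity)]
    nlinarith
  set z := √(a ^ 2 - k ^ 2)
  have hk0 : 0 ≤ k := by positivity
  have hz : 0 < z := Real.sqrt_pos.2 (by nlinarith)
  have hz2 : z ^ 2 = a ^ 2 - k ^ 2 := Real.sq_sqrt (by nlinarith)
  refine ⟨![!₂[0, 0, 0], !₂[d, 0, 0], !₂[x, h, 0], !₂[x, h - k, z]],
    EuclideanSpace.affineIndependent_lowerTriangular hd.ne' hh.ne' hz.ne',
    ?_, ?_, ?_, ?_, ?_, ?_⟩ <;>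
  refine EuclideanSpace.dist_toLp_fin_three_eq (by linarith) ?_
  · ring
  · linear_combination hxh
  · linear_combination hxh - hkh + hz2
  · linear_combination hxh - hdx
  · linear_combination hxh - hdx - hkh + hz2
  · linear_combination hz2

theorem exists_affineIndependent_isFold_one {d B C : ℕ} (hBd : B ≤ d) (hCd : C ≤ d)
    (hBC : d < B + C) :
    ∃ v : Fin 4 → EuclideanSpace ℝ (Fin 3), AffineIndependent ℝ v ∧ IsFold v d B C 1 := by
  have hB : (1 : ℝ) ≤ B := by exact_mod_cast (by omega : 1 ≤ B)
  have hC : (1 : ℝ) ≤ C := by exact_mod_cast (by omega : 1 ≤ C)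
  have hBC' : (d : ℝ) + 1 ≤ B + C := by exact_mod_cast hBC
  have hBd' : (B : ℝ) ≤ d := by exact_mod_cast hBd
  have hCd' : (C : ℝ) ≤ d := by exact_mod_cast hCd
  refine exists_affineIndependent_isFold (by linarith) (by linarith) (by linarith) one_pos ?_
  linarith [half_lt_altitudeSq hB hC hBd' hCd' hBC']

theorem TetraCongruent.sum_sum_dist {v w : Fin 4 → EuclideanSpace ℝ (Fin 3)}
    (h : TetraCongruent v w) (f : ℝ → ℝ) :
    ∑ i, ∑ j, f (dist (w i) (w j)) = ∑ i, ∑ j, f (dist (v i) (v j)) := by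
  obtain ⟨σ, hσ⟩ := h
  simp only [hσ]
  exact Fintype.sum_equiv σ _ _ fun i => Fintype.sum_equiv σ _ _ fun j => rfl

theorem TetraPerim.comp_perm {v : Fin 4 → EuclideanSpace ℝ (Fin 3)} {n : ℕ} (h : TetraPerim v n)
    (σ : Equiv.Perm (Fin 4)) : TetraPerim (v ∘ σ) n := by
  have := TetraCongruent.sum_sum_dist (v := v) (w := v ∘ σ) ⟨σ, fun _ _ => rfl⟩ id
  simp only [id] at this
  rw [TetraPerim, this]
  exact h

namespace IsFold

variable {v w : Fin 4 → EuclideanSpace ℝ (Fin 3)}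

theorem isIntegerTetrahedron {d B C a : ℕ} (hv : AffineIndependent ℝ v) (h : IsFold v d B C a)
    (hd : 0 < d) (hB : 0 < B) (hC : 0 < C) (ha : 0 < a) : IsIntegerTetrahedron v := by
  refine ⟨hv, fun i j hij => ?_⟩
  rw [h.dist_apply]
  fin_cases i <;> fin_cases j <;> first | exact absurd rfl hij | exact ⟨_, ‹_›, rfl⟩

theorem tetraPerim {d B C a n : ℕ} (h : IsFold v d B C a) (hn : d + 2 * B + 2 * C + a = n) :
    TetraPerim v n := by
  have hsum := h.sum_sum_dist id
  simp only [id] at hsum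
  rw [TetraPerim, hsum, ← hn]
  push_cast
  ring

theorem tetraDiam {d : ℕ} {B C a : ℝ} (h : IsFold v d B C a) (hB : B ≤ d) (hC : C ≤ d)
    (ha : a ≤ d) : TetraDiam v d := by
  refine ⟨⟨0, 1, h.1⟩, fun i j => ?_⟩
  rw [h.dist_apply]
  fin_cases i <;> fin_cases j <;> simp [*]

theorem tetraCongruent {σ : Equiv.Perm (Fin 4)} {d B C a : ℝ} (hv : IsFold v d B C a)
    (hw : IsFold (w ∘ σ) d B C a) : TetraCongruent v w := by
  refine ⟨σ.symm, fun i j => ?_⟩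
  rw [hv.dist_apply, ← hw.dist_apply]
  simp

theorem eq_of_sum_sum_dist_sq_eq {d a : ℝ} {B₁ C₁ B₂ C₂ : ℕ} (hv : IsFold v d B₁ C₁ a)
    (hw : IsFold w d B₂ C₂ a) (hBC : B₁ + C₁ = B₂ + C₂) (hle₁ : B₁ ≤ C₁) (hle₂ : B₂ ≤ C₂)
    (h : ∑ i, ∑ j, dist (v i) (v j) ^ 2 = ∑ i, ∑ j, dist (w i) (w j) ^ 2) : B₁ = B₂ := by
  rw [hv.sum_sum_dist (· ^ 2), hw.sum_sum_dist (· ^ 2)] at h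
  refine Nat.eq_of_add_eq_of_sq_add_sq_eq hBC hle₁ hle₂ ?_
  exact_mod_cast (by linarith : (B₁ : ℝ) ^ 2 + C₁ ^ 2 = B₂ ^ 2 + C₂ ^ 2)

end IsFold

namespace IsIntegerTetrahedron

variable {v : Fin 4 → EuclideanSpace ℝ (Fin 3)}

theorem comp_perm (hv : IsIntegerTetrahedron v) (σ : Equiv.Perm (Fin 4)) :
    IsIntegerTetrahedron (v ∘ σ) :=
  ⟨hv.1.comp_embedding σ.toEmbedding, fun i j hij => hv.2 (σ i) (σ j) (σ.injective.ne hij)⟩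

theorem exists_perm_dist_eq {d : ℕ} (hv : IsIntegerTetrahedron v) (hdiam : TetraDiam v d) :
    ∃ σ : Equiv.Perm (Fin 4), dist (v (σ 0)) (v (σ 1)) = d := by
  obtain ⟨⟨i, j, hij⟩, hle⟩ := hdiam
  have hne : i ≠ j := by
    rintro rfl
    obtain ⟨m, hm, h01⟩ := hv.2 0 1 (by decide)
    have := hle 0 1
    rw [h01, ← hij, dist_self] at this
    exact (Nat.cast_pos.2 hm).not_ge this
  have htwo : ∀ i j : Fin 4, i ≠ j → ∃ σ : Equiv.Perm (Fin 4), σ 0 = i ∧ σ 1 = j := by decide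
  obtain ⟨σ, rfl, rfl⟩ := htwo i j hne
  exact ⟨σ, hij⟩

theorem exists_isFold_of_tetraPerim {d : ℕ} (hv : IsIntegerTetrahedron v)
    (hper : TetraPerim v (3 * d + 3)) (h01 : dist (v 0) (v 1) = d) :
    ∃ B C : ℕ, 0 < B ∧ 0 < C ∧ B + C = d + 1 ∧ IsFold v d B C 1 := by
  obtain ⟨hind, hint⟩ := hv
  obtain ⟨B, hB, h02⟩ := hint 0 2 (by decide)
  obtain ⟨C, hC, h12⟩ := hint 1 2 (by decide)
  obtain ⟨b, -, h03⟩ := hint 0 3 (by decide)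
  obtain ⟨c, -, h13⟩ := hint 1 3 (by decide)
  obtain ⟨a, ha, h23⟩ := hint 2 3 (by decide)
  have hface₂ : d < B + C := by
    have := hind.dist_lt_dist_add_dist (i := 0) (j := 1) (k := 2) (by decide) (by decide)
    rw [h01, h02, dist_comm, h12] at this
    exact_mod_cast this
  have hface₃ : d < b + c := by
    have := hind.dist_lt_dist_add_dist (i := 0) (j := 1) (k := 3) (by decide) (by decide)
    rw [h01, h03, dist_comm, h13] at this
    exact_mod_cast this
  have hsum : d + B + b + C + c + a = 3 * d + 3 := by
    have hsum := sum_sum_dist_fin_four v id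
    simp only [id] at hsum
    rw [hper, h01, h02, h03, h12, h13, h23] at hsum
    push_cast at hsum
    exact_mod_cast (by push_cast; linarith : ((d + B + b + C + c + a : ℕ) : ℝ) = 3 * d + 3)
  obtain rfl : a = 1 := by omega
  rw [Nat.cast_one] at h23
  obtain rfl : B = b := eq_of_dist_add_dist_eq_succ h23 h01 (by rwa [dist_comm])
    (by rwa [dist_comm]) (by rwa [dist_comm]) (by rwa [dist_comm]) (by omega) (by omega)
  obtain rfl : C = c := by omega
  exact ⟨B, C, hB, hC, by omega, h01, h02, h03, h12, h13, h23⟩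

end IsIntegerTetrahedron

theorem exists_perm_isFold {d : ℕ} {v : Fin 4 → EuclideanSpace ℝ (Fin 3)}
    (hv : IsIntegerTetrahedron v) (hper : TetraPerim v (3 * d + 3)) (hdiam : TetraDiam v d) :
    ∃ σ : Equiv.Perm (Fin 4), ∃ B : ℕ, 1 ≤ B ∧ 2 * B ≤ d + 1 ∧
      IsFold (v ∘ σ) d B (d + 1 - B : ℕ) 1 := by
  obtain ⟨σ, hσ⟩ := hv.exists_perm_dist_eq hdiam
  obtain ⟨B, C, hB, hC, hBC, hfold⟩ :=
    (hv.comp_perm σ).exists_isFold_of_tetraPerim (hper.comp_perm σ) hσ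
  rcases le_total B C with hle | hle
  · exact ⟨σ, B, hB, by omega, by rwa [show d + 1 - B = C by omega]⟩
  · exact ⟨(Equiv.swap 0 1).trans σ, C, hC, by omega,
      by rw [show d + 1 - C = B by omega]; exact hfold.comp_swap⟩

theorem tetraCount_perim_3d_add_3_general (d : ℕ) :
    tetraCount (3 * d + 3) d = (d + 1) / 2 := by
  have hfold : ∀ B : Set.Icc 1 ((d + 1) / 2), ∃ v, (IsIntegerTetrahedron v ∧
      TetraPerim v (3 * d + 3) ∧ TetraDiam v d) ∧ IsFold v d B (d + 1 - B : ℕ) 1 := by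
    rintro ⟨B, hB₁, hB₂⟩
    obtain ⟨v, hind, hv⟩ :=
      exists_affineIndependent_isFold_one (d := d) (B := B) (C := d + 1 - B)
        (by omega) (by omega) (by omega)
    have hv' : IsFold v d B (d + 1 - B : ℕ) ((1 : ℕ) : ℝ) := by rwa [Nat.cast_one]
    refine ⟨v, ⟨hv'.isIntegerTetrahedron hind (by omega) (by omega) (by omega) one_pos,
      hv'.tetraPerim (by omega), hv.tetraDiam ?_ ?_ ?_⟩, hv⟩
    · exact_mod_cast (by omega : B ≤ d)
    · exact_mod_cast (by omega : d + 1 - B ≤ d)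
    · exact_mod_cast (by omega : 1 ≤ d)
  choose T hT hTfold using hfold
  rw [tetraCount, card_quot_eq_of_invariant (fun B => ⟨T B, hT B⟩)
    (fun v => ∑ i, ∑ j, dist (v.1 i) (v.1 j) ^ 2)
    (fun v w h => (TetraCongruent.sum_sum_dist h (· ^ 2)).symm)]
  · simp
  · intro B₁ B₂ h
    exact Subtype.ext <| (hTfold B₁).eq_of_sum_sum_dist_sq_eq (hTfold B₂)
      (by have := B₁.2.2; have := B₂.2.2; omega) (by have := B₁.2.2; omega)
      (by have := B₂.2.2; omega) h
  · rintro ⟨v, hv, hper, hdiam⟩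
    obtain ⟨σ, B, hB₁, hB₂, hvfold⟩ := exists_perm_isFold hv hper hdiam
    exact ⟨⟨B, hB₁, by omega⟩, (hTfold _).tetraCongruent hvfold⟩

theorem tetraCount_perim_3d_add_3 (d : ℕ) (hd : 0 < d) :
    tetraCount (3 * d + 3) d = (d + 1) / 2 :=
  tetraCount_perim_3d_add_3_general d
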